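/- (Marginal properties.) For every matrix ρ on ℂ^d: (i) the position marginal satisfies Σ_{n ∈ ZMod d} ρ_W(m,n) = ρ_{m,m} for each m ∈ ZMod d; (ii) the momentum marginal satisfies Σ_{m ∈ ZMod d} ρ_W(m,n) = (F† ρ F)_{n,n} for each n ∈ ZMod d, where F is the discrete Fourier transform matrix with entries F_{a,b} = ω^{ab}/√d. -/

import Mathlib

open Matrix Complex

noncomputable section

/-- `ω = exp(2πi/d)`, a primitive `d`-th root of unity. -/
def omega (d : ℕ) : ℂ := Complex.exp (2 * Real.pi * Complex.I / d)

/-- Powers of `ω` with exponent valued in `ZMod d`, evaluated via the canonical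
integer representative (well-defined since `ω ^ d = 1`). -/
def wpow (d : ℕ) (x : ZMod d) : ℂ := omega d ^ x.val

/-- The clock matrix `Z`, acting as `Z e_n = ω^n e_n`. -/
def clockZ (d : ℕ) : Matrix (ZMod d) (ZMod d) ℂ :=
  Matrix.diagonal (fun n => wpow d n)

/-- The shift matrix `X`, acting as `X e_n = e_{n+1}`. -/
def shiftX (d : ℕ) : Matrix (ZMod d) (ZMod d) ℂ :=
  Matrix.of (fun i j => if i = j + 1 then 1 else 0)

/-- The displacement operator `D(k,j) = ω^{-2⁻¹ k j} Z^k X^j`. -/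
def Dop (d : ℕ) [NeZero d] (k j : ZMod d) : Matrix (ZMod d) (ZMod d) ℂ :=
  wpow d (-(2⁻¹ * k * j)) • (clockZ d ^ k.val * shiftX d ^ j.val)

/-- The Weyl symbol of a matrix `A`: `Ã(k,j) = Tr(A · D(k,j))`. -/
def weylSymbol (d : ℕ) [NeZero d] (A : Matrix (ZMod d) (ZMod d) ℂ) (k j : ZMod d) : ℂ :=
  Matrix.trace (A * Dop d k j)

/-- The discrete Wigner function of `ρ`:
`ρ_W(m,n) = (1/d²) Σ_{k,j} Tr(ρ·D(k,j)) ω^{jn−km}`. -/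
def wignerFn (d : ℕ) [NeZero d] (ρ : Matrix (ZMod d) (ZMod d) ℂ) (m n : ZMod d) : ℂ :=
  (1 / (d : ℂ) ^ 2) * ∑ k : ZMod d, ∑ j : ZMod d,
    weylSymbol d ρ k j * wpow d (j * n - k * m)

/-- The discrete Fourier transform matrix, `F_{a,b} = ω^{ab}/√d`. -/
def dftMatrix (d : ℕ) : Matrix (ZMod d) (ZMod d) ℂ :=
  Matrix.of (fun a b => wpow d (a * b) / (Real.sqrt d : ℂ))

variable (d : ℕ)

lemma omega_prim [NeZero d] : IsPrimitiveRoot (omega d) d :=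
  Complex.isPrimitiveRoot_exp d (NeZero.ne d)

lemma omega_pow_d [NeZero d] : omega d ^ d = 1 := (omega_prim d).pow_eq_one

lemma wpow_natCast [NeZero d] (n : ℕ) : wpow d (n : ZMod d) = omega d ^ n := by
  rw [wpow, ZMod.val_natCast]
  conv_rhs => rw [← Nat.div_add_mod n d]
  rw [pow_add, pow_mul, omega_pow_d, one_pow, one_mul]

lemma wpow_zero [NeZero d] : wpow d 0 = 1 := by
  simpa using wpow_natCast d 0

lemma wpow_add [NeZero d] (x y : ZMod d) : wpow d (x + y) = wpow d x * wpow d y := by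
  have h : x + y = ((x.val + y.val : ℕ) : ZMod d) := by
    push_cast
    simp [ZMod.natCast_val, ZMod.cast_id]
  rw [h, wpow_natCast, pow_add, wpow, wpow]

lemma wpow_pow [NeZero d] (x : ZMod d) (n : ℕ) : wpow d x ^ n = wpow d (x * n) := by
  have h : x * n = ((x.val * n : ℕ) : ZMod d) := by
    push_cast
    simp [ZMod.natCast_val, ZMod.cast_id]
  rw [h, wpow_natCast, pow_mul, wpow]

lemma wpow_neg [NeZero d] (x : ZMod d) : wpow d (-x) = (wpow d x)⁻¹ :=
  eq_inv_of_mul_eq_one_left (by rw [← wpow_add, neg_add_cancel, wpow_zero])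

lemma star_wpow [NeZero d] (x : ZMod d) : star (wpow d x) = wpow d (-x) := by
  rw [wpow_neg]
  simp only [wpow, ← inv_pow]
  rw [star_pow]
  congr 1
  rw [omega, Complex.star_def, ← Complex.exp_conj, ← Complex.exp_neg]
  congr 1
  simp [map_div₀, Complex.conj_I, map_ofNat]
  ring

lemma sum_wpow_univ [NeZero d] (h1 : 1 < d) : ∑ n : ZMod d, wpow d n = 0 := by
  rw [← (omega_prim d).geom_sum_eq_zero h1]
  refine Finset.sum_bij (fun n _ => n.val) (fun n _ => Finset.mem_range.2 (ZMod.val_lt n))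
    (fun a _ b _ h => ZMod.val_injective d h) (fun i hi => ⟨(i : ZMod d), Finset.mem_univ _, ZMod.val_cast_of_lt (Finset.mem_range.1 hi)⟩) (fun n _ => rfl)

lemma sum_wpow [NeZero d] (hd : Nat.Prime d) (c : ZMod d) :
    ∑ n : ZMod d, wpow d (c * n) = if c = 0 then (d : ℂ) else 0 := by
  by_cases hc : c = 0
  · simp [hc, wpow_zero, Finset.card_univ, ZMod.card]
  · rw [if_neg hc]
    haveI : Fact (Nat.Prime d) := ⟨hd⟩
    have := Equiv.sum_comp (Equiv.mulLeft₀ c hc) (wpow d)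
    simp only [Equiv.mulLeft₀_apply] at this
    rw [this, sum_wpow_univ d hd.one_lt]

lemma shiftX_pow [NeZero d] (p : ℕ) :
    shiftX d ^ p = Matrix.of (fun i j => if i = j + (p : ZMod d) then 1 else 0) := by
  induction p with
  | zero => ext i j; simp [Matrix.one_apply]
  | succ p ih =>
    rw [pow_succ, ih]
    ext i j
    rw [Matrix.mul_apply]
    simp only [Matrix.of_apply, shiftX, ite_mul, one_mul, zero_mul, mul_ite, mul_one, mul_zero]
    rw [Finset.sum_ite_eq' Finset.univ (j + 1) (fun b => if i = b + (p : ZMod d) then (1:ℂ) else 0)]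
    simp only [Finset.mem_univ, if_true]
    have : j + 1 + (p : ZMod d) = j + ((p : ℕ) + 1 : ℕ) := by push_cast; ring
    rw [this]

lemma weyl_k0 [NeZero d] (ρ : Matrix (ZMod d) (ZMod d) ℂ) (k : ZMod d) :
    weylSymbol d ρ k 0 = ∑ a : ZMod d, ρ a a * wpow d (a * k) := by
  have hD : Dop d k 0 = clockZ d ^ k.val := by
    rw [Dop, ZMod.val_zero, pow_zero, mul_one, mul_zero, neg_zero, wpow_zero, one_smul]
  rw [weylSymbol, hD, clockZ, Matrix.diagonal_pow, Matrix.trace]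
  refine Finset.sum_congr rfl fun a _ => ?_
  rw [Matrix.diag_apply, Matrix.mul_diagonal, Pi.pow_apply, wpow_pow]
  congr 2
  simp [ZMod.natCast_val, ZMod.cast_id]

lemma weyl_0j [NeZero d] (ρ : Matrix (ZMod d) (ZMod d) ℂ) (j : ZMod d) :
    weylSymbol d ρ 0 j = ∑ a : ZMod d, ρ a (a + j) := by
  have hD : Dop d 0 j = shiftX d ^ j.val := by
    rw [Dop, ZMod.val_zero, pow_zero, one_mul]
    rw [mul_zero, zero_mul, neg_zero, wpow_zero, one_smul]
  rw [weylSymbol, hD, shiftX_pow, Matrix.trace]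
  refine Finset.sum_congr rfl fun a _ => ?_
  rw [Matrix.diag_apply, Matrix.mul_apply]
  simp only [Matrix.of_apply, mul_ite, mul_one, mul_zero]
  rw [Finset.sum_ite_eq' Finset.univ (a + (j.val : ZMod d)) (fun b => ρ a b)]
  simp [ZMod.natCast_val, ZMod.cast_id]

theorem wigner_marginals
    (d : ℕ) [NeZero d] (hd : Nat.Prime d) (hodd : Odd d)
    (ρ : Matrix (ZMod d) (ZMod d) ℂ) :
    (∀ m : ZMod d, ∑ n : ZMod d, wignerFn d ρ m n = ρ m m) ∧
      (∀ n : ZMod d, ∑ m : ZMod d, wignerFn d ρ m n =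
        ((dftMatrix d)ᴴ * ρ * dftMatrix d) n n) := by
  have hd0 : (d : ℂ) ≠ 0 := Nat.cast_ne_zero.2 (NeZero.ne d)
  constructor
  · intro m
    have step1 : ∑ n : ZMod d, wignerFn d ρ m n
        = (1 / (d:ℂ)^2) * ∑ k : ZMod d, ∑ j : ZMod d,
            weylSymbol d ρ k j * ∑ n : ZMod d, wpow d (j * n - k * m) := by
      simp only [wignerFn]
      rw [← Finset.mul_sum]
      congr 1
      rw [Finset.sum_comm]
      refine Finset.sum_congr rfl fun k _ => ?_
      rw [Finset.sum_comm]
      refine Finset.sum_congr rfl fun j _ => ?_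
      rw [Finset.mul_sum]
    have key : ∀ k j : ZMod d, ∑ n : ZMod d, wpow d (j * n - k * m)
        = (if j = 0 then (d:ℂ) else 0) * wpow d (-(k * m)) := by
      intro k j
      simp_rw [sub_eq_add_neg, wpow_add]
      rw [← Finset.sum_mul, sum_wpow d hd]
    rw [step1]
    simp_rw [key]
    have step2 : ∀ k : ZMod d, ∑ j : ZMod d,
        weylSymbol d ρ k j * ((if j = 0 then (d:ℂ) else 0) * wpow d (-(k * m)))
        = weylSymbol d ρ k 0 * ((d:ℂ) * wpow d (-(k * m))) := by
      intro k
      rw [Finset.sum_eq_single 0]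
      · simp
      · intro j _ hj; simp [hj]
      · simp
    simp_rw [step2, weyl_k0, Finset.sum_mul, mul_assoc]
    rw [Finset.sum_comm]
    have step3 : ∀ a : ZMod d, ∑ k : ZMod d, ρ a a * (wpow d (a * k) * ((d:ℂ) * wpow d (-(k * m))))
        = ρ a a * (d:ℂ) * (if a - m = 0 then (d:ℂ) else 0) := by
      intro a
      have : ∀ k : ZMod d, ρ a a * (wpow d (a * k) * ((d:ℂ) * wpow d (-(k * m))))
          = ρ a a * (d:ℂ) * wpow d ((a - m) * k) := by
        intro k
        have h2 : (a - m) * k = a * k + -(k * m) := by ring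
        rw [h2, wpow_add]; ring
      simp_rw [this]
      rw [← Finset.mul_sum, sum_wpow d hd]
    simp_rw [step3]
    have : ∑ a : ZMod d, ρ a a * (d:ℂ) * (if a - m = 0 then (d:ℂ) else 0)
        = ρ m m * (d:ℂ) * (d:ℂ) := by
      rw [Finset.sum_eq_single m]
      · simp
      · intro a _ ha
        rw [if_neg (by simpa [sub_eq_zero] using ha), mul_zero]
      · simp
    rw [this]
    field_simp
  · intro n
    have step1 : ∑ m : ZMod d, wignerFn d ρ m n
        = (1 / (d:ℂ)^2) * ∑ k : ZMod d, ∑ j : ZMod d,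
            weylSymbol d ρ k j * (wpow d (j * n) * ∑ m : ZMod d, wpow d (-k * m)) := by
      simp only [wignerFn]
      rw [← Finset.mul_sum]
      congr 1
      rw [Finset.sum_comm]
      refine Finset.sum_congr rfl fun k _ => ?_
      rw [Finset.sum_comm]
      refine Finset.sum_congr rfl fun j _ => ?_
      rw [Finset.mul_sum, Finset.mul_sum]
      refine Finset.sum_congr rfl fun x _ => ?_
      have h2 : j * n - k * x = j * n + (-k) * x := by ring
      rw [h2, wpow_add]
    rw [step1]
    simp_rw [sum_wpow d hd, neg_eq_zero]
    have step2 : ∑ k : ZMod d, ∑ j : ZMod d,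
        weylSymbol d ρ k j * (wpow d (j * n) * if k = 0 then (d:ℂ) else 0)
        = (d:ℂ) * ∑ j : ZMod d, weylSymbol d ρ 0 j * wpow d (j * n) := by
      rw [Finset.sum_eq_single 0]
      · rw [Finset.mul_sum]
        refine Finset.sum_congr rfl fun j _ => ?_
        rw [if_pos rfl]; ring
      · intro k _ hk; simp [hk]
      · simp
    rw [step2]
    simp_rw [weyl_0j, Finset.sum_mul]
    rw [Finset.sum_comm]
    have reindex : ∀ a : ZMod d, ∑ j : ZMod d, ρ a (a + j) * wpow d (j * n)
        = ∑ b : ZMod d, ρ a b * wpow d ((b - a) * n) := by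
      intro a
      have := Equiv.sum_comp (Equiv.addLeft a) (fun b => ρ a b * wpow d ((b - a) * n))
      rw [← this]
      refine Finset.sum_congr rfl fun j _ => ?_
      simp [Equiv.addLeft]
    simp_rw [reindex]
    -- now RHS
    have hsq : ((Real.sqrt d : ℝ) : ℂ) * ((Real.sqrt d : ℝ) : ℂ) = (d : ℂ) := by
      rw [← Complex.ofReal_mul, Real.mul_self_sqrt (Nat.cast_nonneg d)]
      simp
    have hrhs : ((dftMatrix d)ᴴ * ρ * dftMatrix d) n n
        = ∑ b : ZMod d, ∑ a : ZMod d,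
            wpow d (-(a * n)) * ρ a b * wpow d (b * n) / (d : ℂ) := by
      rw [Matrix.mul_apply]
      refine Finset.sum_congr rfl fun b _ => ?_
      rw [Matrix.mul_apply, Finset.sum_mul]
      refine Finset.sum_congr rfl fun a _ => ?_
      rw [Matrix.conjTranspose_apply]
      simp only [dftMatrix, Matrix.of_apply]
      rw [star_div₀, star_wpow]
      have hs : star ((Real.sqrt d : ℝ) : ℂ) = ((Real.sqrt d : ℝ) : ℂ) := by
        rw [Complex.star_def, Complex.conj_ofReal]
      rw [hs]
      field_simp
      rw [sq, hsq]
      exact mul_div_cancel_right₀ _ hd0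
    rw [hrhs, Finset.sum_comm]
    rw [Finset.mul_sum, Finset.mul_sum]
    refine Finset.sum_congr rfl fun a _ => ?_
    rw [Finset.mul_sum, Finset.mul_sum]
    refine Finset.sum_congr rfl fun b _ => ?_
    have h3 : (a - b) * n = -(b * n) + a * n := by ring
    rw [h3, wpow_add]
    field_simp
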